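/- The GLZ relation follows from the definition of interacting fields and symmetry of the T-products: with F_S := (ℏ/i) d/dλ|_{λ=0} S(S)^{⋆−1} ⋆ S(S + λF), one has (1/(iℏ))[G_S, F_S]_⋆ = d/dλ|_{λ=0} ( F_{S+λG} − G_{S+λF} ), where [A,B]_⋆ = A ⋆ B − B ⋆ A. -/

import Mathlib

/-!
Bogoliubov's formula gives `F_S = (ℏ/i) 𝒮(S)⁻¹ 𝒮'(S)F`, so
`d/dλ F_{S+λG} = (ℏ/i) (-𝒮(S)⁻¹ 𝒮'(S)G 𝒮(S)⁻¹ 𝒮'(S)F + 𝒮(S)⁻¹ 𝒮''(S)(G, F))`.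
Antisymmetrising in `F` and `G`, the second-derivative terms cancel because `𝒮''(S)` is
symmetric (this is where the symmetry of the time-ordered products enters), and what is left is
the commutator of `𝒮(S)⁻¹ 𝒮'(S)F` and `𝒮(S)⁻¹ 𝒮'(S)G`, i.e. that of `F_S` and `G_S` up to the
factor `(iℏ)⁻¹ (ℏ/i)² = -ℏ/i`.
-/

/-- Bogoliubov's formula: the interacting field
`F_S := (ℏ/i) d/dλ|_{λ=0} [𝒮(S)^{⋆-1} ⋆ 𝒮(S + λF)]`. -/
noncomputable def intField {Loc A : Type*} [NormedAddCommGroup Loc] [NormedSpace ℂ Loc]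
    [NormedRing A] [NormedAlgebra ℂ A]
    (𝒮 : Loc → A) (ℏ : ℂ) (S F : Loc) : A :=
  (ℏ / Complex.I) • deriv (fun l : ℂ => Ring.inverse (𝒮 S) * 𝒮 (S + l • F)) 0

open ContinuousLinearMap

section LineDeriv

variable {𝕜 E R : Type*} [NontriviallyNormedField 𝕜] [NormedAddCommGroup E] [NormedSpace 𝕜 E]
  [NormedRing R] [NormedAlgebra 𝕜 R] {𝒮 : E → R} {S : E}

theorem HasLineDerivAt.ringInverse [HasSummableGeomSeries R] {a : R} {G : E}
    (h : HasLineDerivAt 𝕜 𝒮 a S G) (hS : IsUnit (𝒮 S)) :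
    HasLineDerivAt 𝕜 (fun X => Ring.inverse (𝒮 X))
      (-(Ring.inverse (𝒮 S) * a * Ring.inverse (𝒮 S))) S G := by
  obtain ⟨u, hu⟩ := hS
  have hinv : HasFDerivAt Ring.inverse
      (-mulLeftRight 𝕜 R (Ring.inverse (𝒮 S)) (Ring.inverse (𝒮 S))) (𝒮 S) := by
    rw [← hu, Ring.inverse_unit]
    exact hasFDerivAt_ringInverse u
  simpa [HasLineDerivAt, Function.comp_def] using hinv.comp_hasDerivAt_of_eq (0 : 𝕜) h (by simp)

theorem hasLineDerivAt_fderiv_apply (hD : DifferentiableAt 𝕜 (fderiv 𝕜 𝒮) S) (F G : E) :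
    HasLineDerivAt 𝕜 (fun X => fderiv 𝕜 𝒮 X F) (fderiv 𝕜 (fderiv 𝕜 𝒮) S G F) S G := by
  simpa [HasLineDerivAt] using (hD.hasFDerivAt.hasLineDerivAt G).clm_apply (hasDerivAt_const 0 F)

theorem hasLineDerivAt_inverse_mul_fderiv [HasSummableGeomSeries R]
    (h𝒮 : ContDiffAt 𝕜 2 𝒮 S) (hS : IsUnit (𝒮 S)) (F G : E) :
    HasLineDerivAt 𝕜 (fun X => Ring.inverse (𝒮 X) * fderiv 𝕜 𝒮 X F)
      (-(Ring.inverse (𝒮 S) * fderiv 𝕜 𝒮 S G * Ring.inverse (𝒮 S)) * fderiv 𝕜 𝒮 S F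
        + Ring.inverse (𝒮 S) * fderiv 𝕜 (fderiv 𝕜 𝒮) S G F) S G := by
  have hd := (h𝒮.differentiableAt two_ne_zero).hasFDerivAt.hasLineDerivAt G
  have hD : DifferentiableAt 𝕜 (fderiv 𝕜 𝒮) S :=
    (h𝒮.fderiv_right (m := 1) (by norm_num)).differentiableAt one_ne_zero
  simpa [HasLineDerivAt, Pi.mul_def] using
    (hd.ringInverse hS).mul (hasLineDerivAt_fderiv_apply hD F G)

theorem hasDerivAt_inverse_mul_fderiv_sub_swap [HasSummableGeomSeries R]
    (h𝒮 : ContDiffAt 𝕜 2 𝒮 S) (hsymm : IsSymmSndFDerivAt 𝕜 𝒮 S) (hS : IsUnit (𝒮 S)) (F G : E) :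
    HasDerivAt (fun t : 𝕜 => Ring.inverse (𝒮 (S + t • G)) * fderiv 𝕜 𝒮 (S + t • G) F
        - Ring.inverse (𝒮 (S + t • F)) * fderiv 𝕜 𝒮 (S + t • F) G)
      (Ring.inverse (𝒮 S) * fderiv 𝕜 𝒮 S F * (Ring.inverse (𝒮 S) * fderiv 𝕜 𝒮 S G)
        - Ring.inverse (𝒮 S) * fderiv 𝕜 𝒮 S G * (Ring.inverse (𝒮 S) * fderiv 𝕜 𝒮 S F)) 0 := by
  refine HasDerivAt.congr_deriv (HasDerivAt.sub (hasLineDerivAt_inverse_mul_fderiv h𝒮 hS F G)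
    (hasLineDerivAt_inverse_mul_fderiv h𝒮 hS G F)) ?_
  rw [hsymm G F]
  noncomm_ring

end LineDeriv

theorem intField_eq_smul_inverse_mul_fderiv {Loc A : Type*} [NormedAddCommGroup Loc]
    [NormedSpace ℂ Loc] [NormedRing A] [NormedAlgebra ℂ A] {𝒮 : Loc → A} {S : Loc}
    (h𝒮 : DifferentiableAt ℂ 𝒮 S) (ℏ : ℂ) (F : Loc) :
    intField 𝒮 ℏ S F = (ℏ / Complex.I) • (Ring.inverse (𝒮 S) * fderiv ℂ 𝒮 S F) := by
  rw [intField, ((h𝒮.hasFDerivAt.hasLineDerivAt F).const_mul _).deriv]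

theorem inv_I_mul_mul_div_I_sq (ℏ : ℂ) :
    (Complex.I * ℏ)⁻¹ * (ℏ / Complex.I * (ℏ / Complex.I)) = -(ℏ / Complex.I) := by
  rw [mul_inv, Complex.inv_I, div_eq_mul_inv, Complex.inv_I]
  linear_combination (-Complex.I ^ 3) * inv_mul_mul_self ℏ - ℏ * Complex.I * Complex.I_sq

theorem stmt19_general {Loc A : Type*} [NormedAddCommGroup Loc] [NormedSpace ℂ Loc]
    [NormedRing A] [NormedAlgebra ℂ A] [CompleteSpace A]
    (𝒮 : Loc → A) (hsmooth : ContDiff ℂ ⊤ 𝒮) (hunit : ∀ X, IsUnit (𝒮 X))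
    (ℏ : ℂ) (S F G : Loc) :
    (Complex.I * ℏ)⁻¹ •
        (intField 𝒮 ℏ S G * intField 𝒮 ℏ S F - intField 𝒮 ℏ S F * intField 𝒮 ℏ S G)
      = deriv (fun l : ℂ => intField 𝒮 ℏ (S + l • G) F - intField 𝒮 ℏ (S + l • F) G) 0 := by
  have hfield (X H : Loc) := intField_eq_smul_inverse_mul_fderiv (hsmooth.differentiable
    (by simp) X) ℏ H
  have hderiv := hasDerivAt_inverse_mul_fderiv_sub_swap (hsmooth.contDiffAt.of_le le_top)
    (hsmooth.contDiffAt.isSymmSndFDerivAt (by simp)) (hunit S) F G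
  simp_rw [hfield, ← smul_sub]
  rw [deriv_fun_const_smul _ hderiv.differentiableAt, hderiv.deriv, smul_mul_smul_comm,
    smul_mul_smul_comm, ← smul_sub, smul_smul, inv_I_mul_mul_div_I_sq, neg_smul, ← smul_neg,
    neg_sub]

/-- GLZ relation: for interacting fields defined by Bogoliubov's formula
from a (smooth, invertible-valued) generating functional `𝒮` — built from symmetric
time-ordered products, so that `𝒮` is a genuine function of its argument — one has
`(1/(iℏ)) [G_S, F_S]_⋆ = d/dλ|_{λ=0} (F_{S+λG} − G_{S+λF})`. -/
theorem stmt19 {Loc A : Type*} [NormedAddCommGroup Loc] [NormedSpace ℂ Loc]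
    [NormedRing A] [NormedAlgebra ℂ A] [CompleteSpace A]
    (𝒮 : Loc → A) (hsmooth : ContDiff ℂ ⊤ 𝒮) (hunit : ∀ X, IsUnit (𝒮 X))
    (ℏ : ℂ) (hℏ : ℏ ≠ 0) (S F G : Loc) :
    (Complex.I * ℏ)⁻¹ •
        (intField 𝒮 ℏ S G * intField 𝒮 ℏ S F - intField 𝒮 ℏ S F * intField 𝒮 ℏ S G)
      = deriv (fun l : ℂ => intField 𝒮 ℏ (S + l • G) F - intField 𝒮 ℏ (S + l • F) G) 0 :=
  stmt19_general 𝒮 hsmooth hunit ℏ S F G
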